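/- arXiv:1206.4770 — 3 statements merged into one kernel-verified Lean document; each statement's English description precedes it below -/
import Mathlib

section
/- Let (p_x) and (q_x) be sequences in (0,1) with limsup_{x→∞} p_x/q_x < 1 and liminf_{x→∞} q_x > 0. Then there exist z > 1, ρ ∈ (0,1), and x_0 such that for all x > x_0, p_x(z-1) + q_x(1/z - 1) + 1 ≤ ρ. -/
/-!
Eventually `q x > δ > 0` and `p x < c q x` with `c < 1`. For `1 < z < 1 / c` the drift factors as
`p (z - 1) + q (1 / z - 1) = (z - 1) (p - q / z) ≤ -(z - 1) (1 / z - c) q`,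
which is at most the negative constant `-(z - 1) (1 / z - c) δ`.
-/

open Filter

lemma exists_pos_eventually_lt_of_pos_liminf {α : Type*} {f : Filter α} {u : α → ℝ}
    (hu : IsBoundedUnder (· ≥ ·) f u) (h : 0 < liminf u f) :
    ∃ δ, 0 < δ ∧ ∀ᶠ x in f, δ < u x := by
  obtain ⟨δ, hδ, hδu⟩ := exists_between h
  exact ⟨δ, hδ, eventually_lt_of_lt_liminf hδu hu⟩

lemma exists_lt_one_eventually_lt_of_limsup_lt_one {α : Type*} {f : Filter α} {u : α → ℝ}
    (hu : IsBoundedUnder (· ≤ ·) f u) (h : limsup u f < 1) :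
    ∃ c, 0 < c ∧ c < 1 ∧ ∀ᶠ x in f, u x < c := by
  obtain ⟨c, hc, hc1⟩ := exists_between (max_lt h one_pos)
  exact ⟨c, (le_max_right _ _).trans_lt hc, hc1,
    eventually_lt_of_limsup_lt ((le_max_left _ _).trans_lt hc) hu⟩

lemma drift_le {p q c δ z : ℝ} (hz : 1 < z) (hcz : c < 1 / z) (hδq : δ ≤ q) (hpq : p ≤ c * q) :
    p * (z - 1) + q * (1 / z - 1) + 1 ≤ 1 - δ * (z - 1) * (1 / z - c) := by
  have hz1 : 0 < z - 1 := sub_pos.mpr hz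
  have hgap : 0 < 1 / z - c := sub_pos.mpr hcz
  calc p * (z - 1) + q * (1 / z - 1) + 1
      = (z - 1) * (p - q * (1 / z)) + 1 := by field_simp; ring
    _ ≤ (z - 1) * (c * q - q * (1 / z)) + 1 := by gcongr
    _ = 1 - q * ((z - 1) * (1 / z - c)) := by ring
    _ ≤ 1 - δ * ((z - 1) * (1 / z - c)) := by gcongr
    _ = 1 - δ * (z - 1) * (1 / z - c) := by ring

lemma drift_rate_mem_Ioo {c δ z : ℝ} (hc : 0 ≤ c) (hz : 1 < z) (hcz : c < 1 / z)
    (hδ : 0 < δ) (hδ1 : δ < 1) :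
    1 - δ * (z - 1) * (1 / z - c) ∈ Set.Ioo (0 : ℝ) 1 := by
  have hz1 : 0 < z - 1 := sub_pos.mpr hz
  have hgap : 0 < 1 / z - c := sub_pos.mpr hcz
  have hlt : (z - 1) * (1 / z - c) < 1 :=
    calc (z - 1) * (1 / z - c) ≤ (z - 1) * (1 / z) := by gcongr; linarith
      _ = 1 - 1 / z := by field_simp
      _ < 1 := by simp only [sub_lt_self_iff]; positivity
  constructor
  · nlinarith [mul_pos hz1 hgap]
  · have := mul_pos (mul_pos hδ hz1) hgap
    linarith

theorem stmt_8 (p q : ℕ → ℝ)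
    (hp : ∀ x, p x ∈ Set.Ioo (0 : ℝ) 1) (hq : ∀ x, q x ∈ Set.Ioo (0 : ℝ) 1)
    (hlimsup : limsup (fun x => p x / q x) atTop < 1)
    (hliminf : 0 < liminf q atTop) :
    ∃ z : ℝ, 1 < z ∧ ∃ ρ ∈ Set.Ioo (0 : ℝ) 1, ∃ x₀ : ℕ,
      ∀ x, x₀ < x → p x * (z - 1) + q x * (1 / z - 1) + 1 ≤ ρ := by
  obtain ⟨δ, hδ, hqδ⟩ := exists_pos_eventually_lt_of_pos_liminf
    (isBoundedUnder_of ⟨0, fun x => (hq x).1.le⟩) hliminf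
  obtain ⟨x₁, hx₁⟩ := hqδ.exists
  have hbdd : IsBoundedUnder (· ≤ ·) atTop (fun x => p x / q x) :=
    isBoundedUnder_of_eventually_le (a := 1 / δ) <| hqδ.mono fun x hx =>
      div_le_div₀ zero_le_one (hp x).2.le hδ hx.le
  obtain ⟨c, hc, hc1, hpqc⟩ := exists_lt_one_eventually_lt_of_limsup_lt_one hbdd hlimsup
  obtain ⟨z, hz, hzc⟩ := exists_between (one_lt_one_div hc hc1)
  have hcz : c < 1 / z := (lt_one_div hc (by linarith)).mpr hzc
  refine ⟨z, hz, _, drift_rate_mem_Ioo hc.le hz hcz hδ (hx₁.trans (hq x₁).2), ?_⟩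
  obtain ⟨x₀, hx₀⟩ := eventually_atTop.mp (hqδ.and hpqc)
  refine ⟨x₀, fun x hx => ?_⟩
  obtain ⟨hδq, hpq⟩ := hx₀ x hx.le
  exact drift_le hz hcz hδq.le ((div_lt_iff₀ (hq x).1).mp hpq).le
end

section
/- With μ_i := ∑_{x≥i} (a_x + b_{x-1}) and the normalized indicators h_i(x) = (1{x≥i} - μ_i)/√(μ_i(1-μ_i)), one has (E[Var(h_i(X)|Y)])^{-1} = (1-μ_i)·[ (∑_{x≥i}(a_x+b_x))/a_{i-1} + (∑_{x≥i}(a_x+b_x))/b_{i-1} + b_{i-1}/a_{i-1} + 1 ] for i ≥ 2. -/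
/-! The only non-algebraic input is `μ = T + b (i - 1)`: re-indexing the `b`-terms of the tail
sum defining `μ` exposes the boundary term `b (i - 1)`. With `q = b (i - 1)`, the identity
`(T + q) (p + q) / (p q) = T/p + T/q + q/p + 1` then finishes the computation. -/

theorem Summable.comp_nat_add_left {G : Type*} [AddCommGroup G] [TopologicalSpace G]
    [IsTopologicalAddGroup G] {f : ℕ → G} (hf : Summable f) (k : ℕ) :
    Summable fun n ↦ f (k + n) := by
  simpa only [add_comm k] using (summable_nat_add_iff k).2 hf

theorem tsum_add_pred_eq_add_tsum {G : Type*} [AddCommGroup G] [TopologicalSpace G]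
    [IsTopologicalAddGroup G] [T2Space G] {a b : ℕ → G} (ha : Summable a) (hb : Summable b)
    {i : ℕ} (hi : 1 ≤ i) :
    ∑' n, (a (i + n) + b (i + n - 1)) = b (i - 1) + ∑' n, (a (i + n) + b (i + n)) := by
  obtain ⟨k, rfl⟩ : ∃ k, i = k + 1 := ⟨i - 1, by omega⟩
  have hdown : ∀ n, k + 1 + n - 1 = k + n := fun n ↦ by omega
  simp only [hdown, Nat.add_sub_cancel]
  rw [(ha.comp_nat_add_left _).tsum_add (hb.comp_nat_add_left _),
    (ha.comp_nat_add_left _).tsum_add (hb.comp_nat_add_left _),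
    (hb.comp_nat_add_left k).tsum_eq_zero_add, add_zero,
    show (fun n ↦ b (k + (n + 1))) = fun n ↦ b (k + 1 + n) from funext fun n ↦ congrArg b (by omega)]
  abel

theorem inv_div_div_mul_one_sub_eq {p q T : ℝ} (hp : p ≠ 0) (hq : q ≠ 0) :
    (p * q / (p + q) / ((T + q) * (1 - (T + q))))⁻¹ =
      (1 - (T + q)) * (T / p + T / q + q / p + 1) := by
  field_simp
  ring

theorem stmt_14_general (a b : ℕ → ℝ) (ha : ∀ i, 1 ≤ i → 0 < a i) (hb : ∀ i, 1 ≤ i → 0 < b i)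
    (hsa : Summable a) (hsb : Summable b)
    (i : ℕ) (hi : 2 ≤ i)
    (μ T : ℝ)
    (hμ : μ = ∑' n : ℕ, (a (i + n) + b (i + n - 1)))  -- μ_i = ∑_{x ≥ i} (a_x + b_{x-1})
    (hT : T = ∑' n : ℕ, (a (i + n) + b (i + n)))      -- T_i = ∑_{x ≥ i} (a_x + b_x)
    :
    -- E[Var(h_i(X)|Y)] = (μ(1-μ))⁻¹ · a_{i-1} b_{i-1}/(a_{i-1}+b_{i-1}); its inverse:
    (a (i - 1) * b (i - 1) / (a (i - 1) + b (i - 1)) / (μ * (1 - μ)))⁻¹ =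
      (1 - μ) * (T / a (i - 1) + T / b (i - 1) + b (i - 1) / a (i - 1) + 1) := by
  have hai := ha (i - 1) (by omega)
  have hbi := hb (i - 1) (by omega)
  have hμT : μ = T + b (i - 1) := by
    rw [hμ, hT, tsum_add_pred_eq_add_tsum hsa hsb (by omega), add_comm]
  rw [hμT]
  exact inv_div_div_mul_one_sub_eq hai.ne' hbi.ne'

theorem stmt_14 (a b : ℕ → ℝ) (ha : ∀ i, 1 ≤ i → 0 < a i) (hb : ∀ i, 1 ≤ i → 0 < b i)
    (hb0 : b 0 = 0) (hsa : Summable a) (hsb : Summable b)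
    (hsum : (∑' i : ℕ, a (i + 1)) + ∑' i : ℕ, b (i + 1) = 1)
    (i : ℕ) (hi : 2 ≤ i)
    (μ T : ℝ)
    (hμ : μ = ∑' n : ℕ, (a (i + n) + b (i + n - 1)))  -- μ_i = ∑_{x ≥ i} (a_x + b_{x-1})
    (hT : T = ∑' n : ℕ, (a (i + n) + b (i + n)))      -- T_i = ∑_{x ≥ i} (a_x + b_x)
    (hμ0 : 0 < μ) (hμ1 : μ < 1) :
    -- E[Var(h_i(X)|Y)] = (μ(1-μ))⁻¹ · a_{i-1} b_{i-1}/(a_{i-1}+b_{i-1}); its inverse: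
    (a (i - 1) * b (i - 1) / (a (i - 1) + b (i - 1)) / (μ * (1 - μ)))⁻¹ =
      (1 - μ) * (T / a (i - 1) + T / b (i - 1) + b (i - 1) / a (i - 1) + 1) :=
  stmt_14_general a b ha hb hsa hsb i hi μ T hμ hT
end

section
/- Let (a_i) be a strictly positive sequence with lim_{i→∞} a_i/a_{i-1} = 1 and (b_i) a nonnegative sequence. Then limsup_{i→∞} (∑_{x=i}^∞ (a_x + b_x)) / a_{i-1} = ∞. -/
open Filter Topology

/- Since consecutive ratios tend to 1, so does `a (i + n) / a (i - 1)` for each fixed `n`. Hence for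
every `N` the first `N + 1` terms of the tail sum, divided by `a (i - 1)`, eventually exceed `N`, and
the quotient even tends to `∞`. -/

theorem tendsto_div_pred_add_of_tendsto_div_pred {K : Type*} [Field K] [TopologicalSpace K]
    [ContinuousMul K] {f : ℕ → K} (hf : ∀ i, f i ≠ 0)
    (hlim : Tendsto (fun i => f i / f (i - 1)) atTop (𝓝 1)) (n : ℕ) :
    Tendsto (fun i => f (i + n) / f (i - 1)) atTop (𝓝 1) := by
  induction n with
  | zero => simpa using hlim
  | succ n ih =>
    have hstep : Tendsto (fun i => f (i + n + 1) / f (i + n)) atTop (𝓝 1) := by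
      simpa [Function.comp_def, ← add_assoc] using hlim.comp (tendsto_add_atTop_nat (n + 1))
    refine (one_mul (1 : K) ▸ hstep.mul ih).congr fun i => ?_
    rw [← add_assoc, div_mul_div_cancel₀ (hf _)]

theorem ENNReal.ofReal_sum_div_le_tsum_div {f g : ℕ → ℝ} (hf : ∀ n, 0 ≤ f n)
    (hfg : ∀ n, f n ≤ g n) {c : ℝ} (hc : 0 < c) (s : Finset ℕ) :
    ENNReal.ofReal (∑ n ∈ s, f n / c) ≤ (∑' n, ENNReal.ofReal (g n)) / ENNReal.ofReal c := by
  rw [← Finset.sum_div, ENNReal.ofReal_div_of_pos hc, ENNReal.ofReal_sum_of_nonneg fun n _ => hf n]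
  gcongr
  calc ∑ n ∈ s, ENNReal.ofReal (f n) ≤ ∑ n ∈ s, ENNReal.ofReal (g n) :=
        Finset.sum_le_sum fun n _ => ENNReal.ofReal_le_ofReal (hfg n)
    _ ≤ ∑' n, ENNReal.ofReal (g n) := ENNReal.sum_le_tsum s

theorem stmt_17 (a b : ℕ → ℝ) (ha : ∀ i, 0 < a i) (hb : ∀ i, 0 ≤ b i)
    (hlim : Tendsto (fun i => a i / a (i - 1)) atTop (nhds 1)) :
    limsup (fun i =>
        (∑' n : ℕ, ENNReal.ofReal (a (i + n) + b (i + n))) / ENNReal.ofReal (a (i - 1)))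
      atTop = (⊤ : ENNReal) := by
  refine Tendsto.limsup_eq (ENNReal.tendsto_nhds_top fun N => ?_)
  have hsum : Tendsto (fun i => ∑ n ∈ Finset.range (N + 1), a (i + n) / a (i - 1))
      atTop (𝓝 (N + 1)) := by
    simpa using tendsto_finsetSum (Finset.range (N + 1)) fun n _ =>
      tendsto_div_pred_add_of_tendsto_div_pred (fun i => (ha i).ne') hlim n
  filter_upwards [hsum.eventually_const_lt (lt_add_one (N : ℝ))] with i hi
  calc (N : ENNReal) = ENNReal.ofReal N := (ENNReal.ofReal_natCast N).symm
    _ < ENNReal.ofReal (∑ n ∈ Finset.range (N + 1), a (i + n) / a (i - 1)) :=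
        (ENNReal.ofReal_lt_ofReal_iff_of_nonneg N.cast_nonneg).2 hi
    _ ≤ _ := ENNReal.ofReal_sum_div_le_tsum_div (fun n => (ha _).le)
        (fun n => le_add_of_nonneg_right (hb _)) (ha _) _
end
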